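/- For every a ∈ ℝ, the Mehler kernel converges to the Dirac mass at 0 as t → 0⁺: for every Schwartz function φ on ℝ, lim_{t→0⁺} ∫_ℝ S_a(x,t) φ(x) dx = φ(0). -/

import Mathlib

open MeasureTheory Topology Filter

noncomputable def mehlerS (a x t : ℝ) : ℝ :=
  (4 * Real.pi * t) ^ (-(1 : ℝ) / 2) *
    Real.sqrt (if a = 0 then 1 else (a * t) / Real.sinh (a * t)) *
    Real.exp (-(x ^ 2 / (4 * t)) * (if a = 0 then 1 else (a * t) / Real.tanh (a * t)))

/-!
For `t > 0` the Mehler kernel is `(cosh at)^{-1/2}` times the density of the centred Gaussian of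
variance `v(t) = 2t / (at coth at)`. As `t → 0⁺` the damping factor tends to `1` and `v(t) → 0`,
and the centred Gaussians converge to the Dirac mass against bounded continuous test functions:
after rescaling to the standard Gaussian this is dominated convergence with a constant bound.
-/

open ProbabilityTheory
open scoped NNReal BoundedContinuousFunction

namespace Real

theorem div_tanh_pos {x : ℝ} (hx : x ≠ 0) : 0 < x / tanh x := by
  rw [tanh_eq_sinh_div_cosh, div_div_eq_mul_div]
  rcases hx.lt_or_gt with hx | hx
  · exact div_pos_of_neg_of_neg (mul_neg_of_neg_of_pos hx (cosh_pos x)) (sinh_neg_iff.2 hx)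
  · exact div_pos (mul_pos hx (cosh_pos x)) (sinh_pos_iff.2 hx)

theorem tendsto_div_tanh_nhdsNE_zero : Tendsto (fun x => x / tanh x) (𝓝[≠] 0) (𝓝 1) := by
  have hsinh : Tendsto (fun x => x⁻¹ * sinh x) (𝓝[≠] 0) (𝓝 1) := by
    simpa [cosh_zero, sinh_zero] using (hasDerivAt_sinh 0).tendsto_slope_zero
  have hcosh : Tendsto cosh (𝓝[≠] 0) (𝓝 1) := by
    simpa using (continuous_cosh.tendsto 0).mono_left nhdsWithin_le_nhds
  refine (div_one (1 : ℝ) ▸ hcosh.div hsinh one_ne_zero).congr fun x => ?_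
  simp only [Pi.div_apply, tanh_eq_sinh_div_cosh, div_eq_mul_inv, mul_inv, inv_inv]
  ring

end Real

namespace ProbabilityTheory

variable {E : Type*} [NormedAddCommGroup E] [NormedSpace ℝ E] [CompleteSpace E]

theorem integral_gaussianReal_eq_integral_comp_mul (f : ℝ → E) (μ : ℝ) (v : ℝ≥0) :
    ∫ x, f x ∂gaussianReal μ v = ∫ y, f (μ + √(v : ℝ) * y) ∂gaussianReal 0 1 := by
  have hshift : (gaussianReal 0 v).map (μ + ·) = gaussianReal μ v := by
    rw [gaussianReal_map_const_add, zero_add]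
  have hscale : (gaussianReal 0 1).map (√(v : ℝ) * ·) = gaussianReal 0 v := by
    rw [gaussianReal_map_const_mul, mul_zero, mul_one]
    congr 1
    ext
    simp
  rw [← hshift, (measurableEmbedding_addLeft μ).integral_map]
  by_cases hv : v = 0
  · simp [hv, gaussianReal_zero_var]
  rw [← hscale, (measurableEmbedding_mulLeft₀ (by positivity)).integral_map]

theorem tendsto_integral_gaussianReal_nhds_zero (f : ℝ →ᵇ E) (μ : ℝ) :
    Tendsto (fun v : ℝ≥0 => ∫ x, f x ∂gaussianReal μ v) (𝓝 0) (𝓝 (f μ)) := by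
  simp only [integral_gaussianReal_eq_integral_comp_mul f μ]
  have hconst : ∫ _ : ℝ, f μ ∂gaussianReal 0 1 = f μ := by simp
  rw [← hconst]
  refine tendsto_integral_filter_of_dominated_convergence (fun _ => ‖f‖) ?_ ?_
    (integrable_const _) ?_
  · exact Eventually.of_forall fun _ => (f.continuous.comp (by fun_prop)).aestronglyMeasurable
  · exact Eventually.of_forall fun _ => ae_of_all _ fun _ => f.norm_coe_le_norm _
  · refine ae_of_all _ fun y => (f.continuous.tendsto μ).comp ?_
    have : Continuous (fun v : ℝ≥0 => μ + √(v : ℝ) * y) := by fun_prop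
    simpa using this.tendsto 0

end ProbabilityTheory

open Real

noncomputable def mehlerCoth (a t : ℝ) : ℝ := if a = 0 then 1 else a * t / tanh (a * t)

theorem mehlerCoth_pos (a : ℝ) {t : ℝ} (ht : 0 < t) : 0 < mehlerCoth a t := by
  unfold mehlerCoth
  split_ifs with ha
  · exact one_pos
  · exact div_tanh_pos (mul_ne_zero ha ht.ne')

theorem tendsto_mehlerCoth (a : ℝ) : Tendsto (mehlerCoth a) (𝓝[>] 0) (𝓝 1) := by
  by_cases ha : a = 0
  · exact tendsto_const_nhds.congr fun t => by simp [mehlerCoth, ha]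
  have hat : Tendsto (a * ·) (𝓝[>] 0) (𝓝[≠] 0) := by
    refine tendsto_nhdsWithin_of_tendsto_nhds_of_eventually_within _ ?_ ?_
    · simpa using ((continuous_const_mul a).tendsto 0).mono_left nhdsWithin_le_nhds
    · filter_upwards [self_mem_nhdsWithin] with t ht using mul_ne_zero ha (ne_of_gt ht)
  have hK : mehlerCoth a = (fun x => x / tanh x) ∘ (a * ·) := by
    ext t
    simp [mehlerCoth, ha]
  exact hK ▸ tendsto_div_tanh_nhdsNE_zero.comp hat

noncomputable def mehlerVariance (a t : ℝ) : ℝ≥0 := (2 * t / mehlerCoth a t).toNNReal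

theorem coe_mehlerVariance (a : ℝ) {t : ℝ} (ht : 0 < t) :
    (mehlerVariance a t : ℝ) = 2 * t / mehlerCoth a t :=
  Real.coe_toNNReal _ (div_pos (by positivity) (mehlerCoth_pos a ht)).le

theorem mehlerVariance_ne_zero (a : ℝ) {t : ℝ} (ht : 0 < t) : mehlerVariance a t ≠ 0 :=
  (toNNReal_pos.2 (div_pos (by positivity) (mehlerCoth_pos a ht))).ne'

theorem tendsto_mehlerVariance (a : ℝ) : Tendsto (mehlerVariance a) (𝓝[>] 0) (𝓝 0) := by
  have h : Tendsto (fun t => 2 * t / mehlerCoth a t) (𝓝[>] 0) (𝓝 (2 * 0 / 1)) :=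
    (((continuous_const_mul 2).tendsto 0).mono_left nhdsWithin_le_nhds).div
      (tendsto_mehlerCoth a) one_ne_zero
  rw [mul_zero, zero_div] at h
  exact Real.toNNReal_zero ▸ (continuous_real_toNNReal.tendsto 0).comp h

theorem mehlerS_eq_mul_gaussianPDFReal (a x : ℝ) {t : ℝ} (ht : 0 < t) :
    mehlerS a x t = (√(cosh (a * t)))⁻¹ * gaussianPDFReal 0 (mehlerVariance a t) x := by
  have hK := mehlerCoth_pos a ht
  have hsinh : (if a = 0 then 1 else a * t / sinh (a * t)) = mehlerCoth a t / cosh (a * t) := by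
    unfold mehlerCoth
    split_ifs with ha
    · simp [ha]
    · rw [tanh_eq_sinh_div_cosh]
      field_simp
  have hexp : -(x ^ 2 / (4 * t)) * mehlerCoth a t
      = -(x - 0) ^ 2 / (2 * (2 * t / mehlerCoth a t)) := by
    field_simp
    ring
  have hnorm : (4 * π * t) ^ (-(1 : ℝ) / 2) * √(mehlerCoth a t / cosh (a * t))
      = (√(cosh (a * t)))⁻¹ * (√(2 * π * (2 * t / mehlerCoth a t)))⁻¹ := by
    rw [show (-(1 : ℝ) / 2) = -(1 / 2) by norm_num, rpow_neg (by positivity), ← sqrt_eq_rpow,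
      sqrt_div' _ (cosh_pos _).le,
      show 2 * π * (2 * t / mehlerCoth a t) = 4 * π * t / mehlerCoth a t by ring, sqrt_div' _ hK.le]
    have : 0 < √(mehlerCoth a t) := sqrt_pos.2 hK
    field_simp
  rw [gaussianPDFReal, coe_mehlerVariance a ht, ← hexp, ← mul_assoc, ← hnorm, mehlerS, ← hsinh]
  rfl

theorem stmt_6 (a : ℝ) (φ : SchwartzMap ℝ ℝ) :
    Tendsto (fun t : ℝ => ∫ x : ℝ, mehlerS a x t * φ x) (𝓝[>] 0) (𝓝 (φ 0)) := by
  have hcosh : Tendsto (fun t => (√(cosh (a * t)))⁻¹) (𝓝[>] 0) (𝓝 1) := by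
    have h := (((continuous_cosh.comp (continuous_const_mul a)).sqrt).tendsto 0).inv₀ (by simp)
    simpa using h.mono_left nhdsWithin_le_nhds
  have hgauss := (tendsto_integral_gaussianReal_nhds_zero
    φ.toBoundedContinuousFunction 0).comp (tendsto_mehlerVariance a)
  refine (one_mul (φ 0) ▸ hcosh.mul hgauss).congr' ?_
  filter_upwards [self_mem_nhdsWithin] with t ht
  rw [Function.comp_apply, integral_gaussianReal_eq_integral_smul (mehlerVariance_ne_zero a ht),
    ← integral_const_mul]
  simp only [mehlerS_eq_mul_gaussianPDFReal a _ ht, SchwartzMap.toBoundedContinuousFunction_apply,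
    smul_eq_mul, mul_assoc]
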